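/- Let E = EuclideanSpace ℝ (Fin n) with standard orthonormal basis (b i), and let X : E → E be a continuously differentiable vector field such that the function x ↦ ‖X x‖ is integrable on E with respect to the Lebesgue (volume) measure and such that div X (x) := ∑ i ⟪fderiv ℝ X x (b i), b i⟫ ≤ 0 for every x. Then div X (x) = 0 for every x ∈ E. -/

import Mathlib

/-!
Integrating by parts against the rescaled cutoffs `φ (R⁻¹ • x)` of a bump function `φ` gives
`∫ φ (R⁻¹ • x) * div X x = -R⁻¹ ∫ dφ (R⁻¹ • x) (X x)`, which is `O(‖X‖₁ / R)`. As `-div X ≥ 0` and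
the cutoffs increase pointwise to `1`, the integral of `-div X` against any fixed cutoff is `≤ 0`,
so the continuous nonnegative function `-div X` vanishes identically.
-/

open RealInnerProductSpace MeasureTheory

open Filter Metric Topology

section Bump

variable {E : Type*} [NormedAddCommGroup E] [NormedSpace ℝ E] [HasContDiffBump E]

theorem ContDiffBump.apply_inv_smul_eq_one (f : ContDiffBump (0 : E)) {R : ℝ} (hR : 0 < R)
    {x : E} (hx : ‖x‖ ≤ R * f.rIn) : f (R⁻¹ • x) = 1 := by
  refine f.one_of_mem_closedBall (mem_closedBall_zero_iff.2 ?_)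
  rw [norm_smul, Real.norm_of_nonneg (inv_nonneg.2 hR.le), inv_mul_le_iff₀ hR]
  exact hx

theorem ContDiffBump.apply_inv_smul_le (f : ContDiffBump (0 : E)) {R₀ R : ℝ} (hR₀ : 0 < R₀)
    (hR : R₀ * f.rOut ≤ R * f.rIn) (x : E) : f (R₀⁻¹ • x) ≤ f (R⁻¹ • x) := by
  have hRpos : 0 < R := pos_of_mul_pos_left ((mul_pos hR₀ f.rOut_pos).trans_le hR) f.rIn_pos.le
  by_cases hx : ‖x‖ < R₀ * f.rOut
  · rw [f.apply_inv_smul_eq_one hRpos (hx.le.trans hR)]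
    exact f.le_one
  · rw [f.zero_of_le_dist]
    · exact f.nonneg
    · rw [dist_zero_right, norm_smul, Real.norm_of_nonneg (inv_nonneg.2 hR₀.le),
        le_inv_mul_iff₀ hR₀]
      exact not_lt.1 hx

variable [FiniteDimensional ℝ E] [MeasurableSpace E] [OpensMeasurableSpace E]
  {μ : Measure E} [μ.IsOpenPosMeasure] [IsFiniteMeasureOnCompacts μ]

theorem eq_zero_of_tendsto_integral_bump_mul (f : ContDiffBump (0 : E)) {g : E → ℝ}
    (hg : Continuous g) (hg0 : 0 ≤ g)
    (hlim : Tendsto (fun R : ℝ => ∫ x, f (R⁻¹ • x) * g x ∂μ) atTop (𝓝 0)) : g = 0 := by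
  have hcont (R : ℝ) : Continuous fun x => f (R⁻¹ • x) * g x :=
    (f.continuous.comp (continuous_const_smul _)).mul hg
  have hsupp {R : ℝ} (hR : 0 < R) : HasCompactSupport fun x => f (R⁻¹ • x) * g x :=
    (f.hasCompactSupport.comp_smul (inv_ne_zero hR.ne')).mul_right
  ext x₀
  by_contra hx₀
  set R₀ := ‖x₀‖ / f.rIn + 1
  have hR₀ : 0 < R₀ := by have := f.rIn_pos; positivity
  have hpos : 0 < ∫ x, f (R₀⁻¹ • x) * g x ∂μ := by
    refine (hcont R₀).integral_pos_of_hasCompactSupport_nonneg_nonzero (hsupp hR₀)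
      (fun x => mul_nonneg f.nonneg (hg0 x)) (x := x₀) ?_
    rw [f.apply_inv_smul_eq_one hR₀, one_mul]
    · exact hx₀
    · rw [← div_le_iff₀ f.rIn_pos]
      exact le_add_of_nonneg_right zero_le_one
  have hle : ∀ᶠ R : ℝ in atTop, ∫ x, f (R₀⁻¹ • x) * g x ∂μ ≤ ∫ x, f (R⁻¹ • x) * g x ∂μ := by
    filter_upwards [eventually_ge_atTop (R₀ * f.rOut / f.rIn)] with R hR
    rw [div_le_iff₀ f.rIn_pos] at hR
    have hRpos : 0 < R :=
      pos_of_mul_pos_left ((mul_pos hR₀ f.rOut_pos).trans_le hR) f.rIn_pos.le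
    exact integral_mono ((hcont R₀).integrable_of_hasCompactSupport (hsupp hR₀))
      ((hcont R).integrable_of_hasCompactSupport (hsupp hRpos)) fun x =>
        mul_le_mul_of_nonneg_right (f.apply_inv_smul_le hR₀ hR x) (hg0 x)
  exact not_lt_of_ge (ge_of_tendsto hlim hle) hpos

end Bump

variable {E ι : Type*} [NormedAddCommGroup E] [InnerProductSpace ℝ E] [Fintype ι]

theorem fderiv_inner_left_apply {F : Type*} [NormedAddCommGroup F] [NormedSpace ℝ F]
    {X : F → E} {x : F} (hX : DifferentiableAt ℝ X x) (v : F) (w : E) :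
    fderiv ℝ (fun y => ⟪w, X y⟫) x v = ⟪w, fderiv ℝ X x v⟫ := by
  have h : HasFDerivAt (fun y => ⟪w, X y⟫) ((innerSL ℝ w).comp (fderiv ℝ X x)) x :=
    (innerSL ℝ w).hasFDerivAt.comp x hX.hasFDerivAt
  rw [h.fderiv]
  rfl

noncomputable def divergence (b : OrthonormalBasis ι ℝ E) (X : E → E) (x : E) : ℝ :=
  ∑ i, ⟪fderiv ℝ X x (b i), b i⟫

section Divergence

variable {b : OrthonormalBasis ι ℝ E} {X : E → E}

theorem continuous_divergence (hX : ContDiff ℝ 1 X) : Continuous (divergence b X) :=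
  continuous_finsetSum _ fun _ _ =>
    ((hX.continuous_fderiv one_ne_zero).clm_apply continuous_const).inner continuous_const

variable [FiniteDimensional ℝ E] [MeasurableSpace E] [BorelSpace E] {μ : Measure E}
  [μ.IsAddHaarMeasure]

theorem integral_mul_divergence {φ : E → ℝ} (hX : ContDiff ℝ 1 X) (hφ : ContDiff ℝ 1 φ)
    (hφc : HasCompactSupport φ) :
    ∫ x, φ x * divergence b X x ∂μ = -∫ x, fderiv ℝ φ x (X x) ∂μ := by
  have hXd := hX.differentiable one_ne_zero
  have hdX := hX.continuous_fderiv one_ne_zero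
  have hdφ := hφ.continuous_fderiv one_ne_zero
  have hφ_dX (i : ι) : Integrable (fun x => φ x * ⟪b i, fderiv ℝ X x (b i)⟫) μ :=
    (hφ.continuous.mul (continuous_const.inner (hdX.clm_apply continuous_const))
      ).integrable_of_hasCompactSupport hφc.mul_right
  have hdφ_X (i : ι) : Integrable (fun x => fderiv ℝ φ x (b i) * ⟪b i, X x⟫) μ :=
    ((hdφ.clm_apply continuous_const).mul (continuous_const.inner hX.continuous)
      ).integrable_of_hasCompactSupport (hφc.fderiv_apply ℝ (b i)).mul_right
  have hparts (i : ι) : ∫ x, φ x * ⟪b i, fderiv ℝ X x (b i)⟫ ∂μ =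
      -∫ x, fderiv ℝ φ x (b i) * ⟪b i, X x⟫ ∂μ := by
    simp_rw [← fderiv_inner_left_apply (hXd _)]
    refine integral_mul_fderiv_eq_neg_fderiv_mul_of_integrable (hdφ_X i) ?_
      ((hφ.continuous.mul (continuous_const.inner hX.continuous)
        ).integrable_of_hasCompactSupport hφc.mul_right)
      (fun x _ => hφ.differentiable one_ne_zero x)
      (fun x _ => (differentiableAt_const _).inner ℝ (hXd x))
    simpa only [fderiv_inner_left_apply (hXd _)] using hφ_dX i
  calc ∫ x, φ x * divergence b X x ∂μ
      = ∑ i, ∫ x, φ x * ⟪b i, fderiv ℝ X x (b i)⟫ ∂μ := by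
        simp only [divergence, Finset.mul_sum, real_inner_comm (b _)]
        exact integral_finsetSum _ fun i _ => hφ_dX i
    _ = -∫ x, fderiv ℝ φ x (X x) ∂μ := by
        rw [Finset.sum_congr rfl fun i _ => hparts i, Finset.sum_neg_distrib,
          ← integral_finsetSum _ fun i _ => hdφ_X i]
        congr 2 with x
        conv_rhs => rw [← b.sum_repr' (X x)]
        simp [mul_comm]

theorem tendsto_integral_comp_smul_mul_divergence {φ : E → ℝ} (hX : ContDiff ℝ 1 X)
    (hint : Integrable (fun x => ‖X x‖) μ) (hφ : ContDiff ℝ 1 φ) (hφc : HasCompactSupport φ) :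
    Tendsto (fun R : ℝ => ∫ x, φ (R⁻¹ • x) * divergence b X x ∂μ) atTop (𝓝 0) := by
  obtain ⟨C, hC⟩ :=
    (hφ.continuous_fderiv one_ne_zero).bounded_above_of_compact_support (hφc.fderiv ℝ)
  have hbound : ∀ R > 0,
      ‖∫ x, φ (R⁻¹ • x) * divergence b X x ∂μ‖ ≤ R⁻¹ * C * ∫ x, ‖X x‖ ∂μ := by
    intro R hR
    rw [integral_mul_divergence (φ := fun x => φ (R⁻¹ • x)) hX
      (hφ.comp (contDiff_const_smul R⁻¹)) (hφc.comp_smul (inv_ne_zero hR.ne')), norm_neg,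
      ← integral_const_mul]
    refine norm_integral_le_of_norm_le (hint.const_mul _) (ae_of_all _ fun x => ?_)
    rw [fderiv_comp_smul]
    calc ‖(R⁻¹ • fderiv ℝ φ (R⁻¹ • x)) (X x)‖
        ≤ ‖R⁻¹ • fderiv ℝ φ (R⁻¹ • x)‖ * ‖X x‖ := ContinuousLinearMap.le_opNorm _ _
      _ ≤ R⁻¹ * C * ‖X x‖ := by
        rw [norm_smul, Real.norm_of_nonneg (inv_nonneg.2 hR.le)]
        gcongr
        exact hC _
  have hlim : Tendsto (fun R : ℝ => R⁻¹ * C * ∫ x, ‖X x‖ ∂μ) atTop (𝓝 0) := by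
    simpa using ((tendsto_inv_atTop_zero (𝕜 := ℝ)).mul_const C).mul_const (∫ x, ‖X x‖ ∂μ)
  exact squeeze_zero_norm' (eventually_gt_atTop 0 |>.mono hbound) hlim

theorem divergence_eq_zero_of_nonpos_of_integrable (hX : ContDiff ℝ 1 X)
    (hint : Integrable (fun x => ‖X x‖) μ) (hdiv : ∀ x, divergence b X x ≤ 0) :
    divergence b X = 0 := by
  let f : ContDiffBump (0 : E) := ⟨1, 2, one_pos, one_lt_two⟩
  have h := tendsto_integral_comp_smul_mul_divergence (b := b) hX hint f.contDiff
    f.hasCompactSupport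
  have := eq_zero_of_tendsto_integral_bump_mul (μ := μ) f (continuous_divergence hX).neg
    (fun x => neg_nonneg.2 (hdiv x)) (by simpa [integral_neg] using h.neg)
  exact neg_eq_zero.1 this

end Divergence

theorem div_nonpos_integrable_eq_zero (n : ℕ)
    (X : EuclideanSpace ℝ (Fin n) → EuclideanSpace ℝ (Fin n))
    (hX : ContDiff ℝ 1 X)
    (hint : Integrable (fun x => ‖X x‖) volume)
    (b : Fin n → EuclideanSpace ℝ (Fin n))
    (hb : b = fun i => EuclideanSpace.basisFun (Fin n) ℝ i)
    (hdiv : ∀ x, ∑ i, ⟪fderiv ℝ X x (b i), b i⟫ ≤ 0) :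
    ∀ x, ∑ i, ⟪fderiv ℝ X x (b i), b i⟫ = 0 := by
  subst hb
  exact congrFun (divergence_eq_zero_of_nonpos_of_integrable hX hint hdiv)
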